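/- Let A be an n×n real matrix and B an n×m real matrix with rank(B) = n. If s is an integer with s ≥ max{1, n − rank(A)} and K is an integer with K ≥ ⌈n/s⌉, then there exists an s-sparse actuator schedule S = (S_0, …, S_{K−1}) of length K such that the associated controllability matrix R_S has rank n. -/

import Mathlib

/-!
Choose the actuator sets greedily, from the highest power of `A` down. Write `Vᵢ = range Aⁱ`.
Since `A Vᵢ = Vᵢ₊₁`, rank–nullity gives `dim Vᵢ ≤ dim Vᵢ₊₁ + dim ker A ≤ dim Vᵢ₊₁ + s`. Suppose the
columns chosen for the powers `> i` span `X ⊆ Vᵢ₊₁` with `dim X ≥ min (dim Vᵢ₊₁) ((K-i-1) s)`. The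
vectors `Aⁱ bⱼ` span `Vᵢ ⊇ X`, so adding them one at a time as long as they leave the current span,
`s` of them raise the dimension to at least `min (dim Vᵢ) (dim X + s) ≥ min (dim Vᵢ) ((K-i) s)`.
At `i = 0` this is `min n (K s) = n`.
-/

open Matrix Submodule Module

section

variable {K V ι : Type*} [DivisionRing K] [AddCommGroup V] [Module K V] [FiniteDimensional K V]

theorem exists_finset_min_finrank_le_finrank_sup_span (v : ι → V) (X : Submodule K V) (t : ℕ) :
    ∃ T : Finset ι, T.card ≤ t ∧
      min (finrank K ↥(X ⊔ span K (Set.range v))) (finrank K X + t) ≤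
        finrank K ↥(X ⊔ span K (v '' T)) := by
  classical
  induction t with
  | zero => exact ⟨∅, le_rfl, (min_le_right _ _).trans (finrank_mono le_sup_left)⟩
  | succ t ih =>
    obtain ⟨T, hcard, hT⟩ := ih
    by_cases hall : ∀ x, v x ∈ X ⊔ span K (v '' T)
    · refine ⟨T, hcard.trans t.le_succ, (min_le_left _ _).trans (finrank_mono ?_)⟩
      exact sup_le le_sup_left (span_le.2 (Set.range_subset_iff.2 hall))
    · obtain ⟨x, hx⟩ := not_forall.1 hall
      have hlt : X ⊔ span K (v '' T) < X ⊔ span K (v '' ↑(insert x T)) := by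
        refine SetLike.lt_iff_le_and_exists.2 ⟨sup_le_sup_left (span_mono ?_) _, v x, ?_, hx⟩
        · exact Set.image_mono (by simp)
        · exact mem_sup_right (subset_span ⟨x, by simp, rfl⟩)
      refine ⟨insert x T, (Finset.card_insert_le x T).trans (by omega), ?_⟩
      have := finrank_lt_finrank_of_lt hlt
      omega

theorem finrank_le_finrank_map_add_finrank_ker {V₂ : Type*} [AddCommGroup V₂] [Module K V₂]
    (f : V →ₗ[K] V₂) (X : Submodule K V) :
    finrank K X ≤ finrank K (X.map f) + finrank K (LinearMap.ker f) := by
  have hker : finrank K (LinearMap.ker (f.domRestrict X)) ≤ finrank K (LinearMap.ker f) := by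
    rw [LinearMap.ker_domRestrict, ← finrank_map_subtype_eq, map_comap_subtype]
    exact finrank_mono inf_le_right
  have := LinearMap.finrank_range_add_finrank_ker (f.domRestrict X)
  rw [LinearMap.range_domRestrict] at this
  omega

theorem finrank_range_pow_le_finrank_range_pow_succ_add_finrank_ker (f : Module.End K V) (i : ℕ) :
    finrank K (LinearMap.range (f ^ i)) ≤
      finrank K (LinearMap.range (f ^ (i + 1))) + finrank K (LinearMap.ker f) := by
  rw [pow_succ', Module.End.mul_eq_comp, LinearMap.range_comp]
  exact finrank_le_finrank_map_add_finrank_ker f _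

theorem exists_pow_schedule_min_le_finrank_span (f : Module.End K V) {v : ι → V}
    (hv : span K (Set.range v) = ⊤) {s : ℕ} (hker : finrank K (LinearMap.ker f) ≤ s) (d i : ℕ) :
    ∃ T : ℕ → Finset ι, (∀ l, (T l).card ≤ s) ∧
      min (finrank K (LinearMap.range (f ^ i))) (d * s) ≤
        finrank K (span K (⋃ l ∈ Finset.Ico i (i + d), (f ^ l) ∘ v '' T l)) := by
  induction d generalizing i with
  | zero => exact ⟨fun _ => ∅, by simp, by simp⟩
  | succ d ih =>
    obtain ⟨T, hcard, hT⟩ := ih (i + 1)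
    set X := span K (⋃ l ∈ Finset.Ico (i + 1) (i + 1 + d), (f ^ l) ∘ v '' T l)
    obtain ⟨Tᵢ, hcardᵢ, hTᵢ⟩ := exists_finset_min_finrank_le_finrank_sup_span ((f ^ i) ∘ v) X s
    have hX : X ≤ LinearMap.range (f ^ i) := by
      refine span_le.2 (Set.iUnion₂_subset fun l hl => ?_)
      rintro _ ⟨x, -, rfl⟩
      refine ⟨(f ^ (l - i)) (v x), ?_⟩
      have hil : i ≤ l := by have := Finset.mem_Ico.1 hl; omega
      rw [← Module.End.mul_apply, pow_mul_pow_sub f hil, Function.comp_apply]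
    have hspan : span K (Set.range ((f ^ i) ∘ v)) = LinearMap.range (f ^ i) := by
      rw [Set.range_comp, span_image, hv, LinearMap.range_eq_map]
    have hIco : Finset.Ico i (i + (d + 1)) = insert i (Finset.Ico (i + 1) (i + 1 + d)) := by
      ext l; simp only [Finset.mem_Ico, Finset.mem_insert]; omega
    have hnew : span K (⋃ l ∈ Finset.Ico i (i + (d + 1)),
        (f ^ l) ∘ v '' Function.update T i Tᵢ l) = X ⊔ span K ((f ^ i) ∘ v '' Tᵢ) := by
      rw [hIco, Finset.set_biUnion_insert, Function.update_self, span_union, sup_comm]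
      congr 2
      refine Set.iUnion₂_congr fun l hl => ?_
      rw [Function.update_of_ne (by have := Finset.mem_Ico.1 hl; omega)]
    refine ⟨Function.update T i Tᵢ, fun l => ?_, ?_⟩
    · rcases eq_or_ne l i with rfl | hl
      · simpa using hcardᵢ
      · simpa [hl] using hcard l
    · rw [hspan, sup_eq_right.2 hX] at hTᵢ
      have := finrank_range_pow_le_finrank_range_pow_succ_add_finrank_ker f i
      rw [hnew, Nat.succ_mul]
      omega

end

namespace Matrix

variable {F : Type*} [Field F]

theorem rank_add_finrank_ker_toLin' {m n : Type*} [Fintype m] [Fintype n] [DecidableEq n]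
    (A : Matrix m n F) : A.rank + finrank F (LinearMap.ker A.toLin') = Fintype.card n := by
  rw [Matrix.rank, ← toLin'_apply', LinearMap.finrank_range_add_finrank_ker,
    finrank_fintype_fun_eq_card]

def controllabilityMatrix {n m K : ℕ} (A : Matrix (Fin n) (Fin n) F) (B : Matrix (Fin n) (Fin m) F)
    (S : Fin K → Finset (Fin m)) : Matrix (Fin n) (Σ k : Fin K, {j : Fin m // j ∈ S k}) F :=
  of fun i q => (A ^ (K - 1 - (q.1 : ℕ)) * B) i q.2.val

theorem span_pow_image_col_le_span_col_controllabilityMatrix {n m : ℕ}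
    (A : Matrix (Fin n) (Fin n) F) (B : Matrix (Fin n) (Fin m) F) (T : ℕ → Finset (Fin m))
    (K : ℕ) :
    span F (⋃ l ∈ Finset.range K, (A.toLin' ^ l) ∘ B.col '' T l) ≤
      span F (Set.range (controllabilityMatrix A B fun k : Fin K => T (K - 1 - k)).col) := by
  refine span_mono (Set.iUnion₂_subset fun l hl => ?_)
  rintro _ ⟨x, hx, rfl⟩
  have hidx : K - 1 - (K - 1 - l) = l := by have := Finset.mem_range.1 hl; omega
  refine ⟨⟨⟨K - 1 - l, by have := Finset.mem_range.1 hl; omega⟩, x, by simpa [hidx] using hx⟩, ?_⟩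
  ext i
  simp only [controllabilityMatrix, col_apply, of_apply, hidx, ← toLin'_pow, Function.comp_apply,
    toLin'_apply, mul_apply, mulVec, dotProduct]

end Matrix

theorem stmt_1 {n m : ℕ} (A : Matrix (Fin n) (Fin n) ℝ) (B : Matrix (Fin n) (Fin m) ℝ)
    (hB : B.rank = n) (s K : ℕ) (hs : max 1 (n - A.rank) ≤ s)
    (hK : (⌈(n : ℚ) / (s : ℚ)⌉ : ℤ) ≤ (K : ℤ)) :
    ∃ S : Fin K → Finset (Fin m), (∀ k : Fin K, (S k).card ≤ s) ∧
      Matrix.rank (Matrix.of fun (i : Fin n) (q : Σ k : Fin K, {j : Fin m // j ∈ S k}) =>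
        (A ^ (K - 1 - (q.1 : ℕ)) * B) i q.2.val) = n := by
  have hKs : n ≤ K * s := by
    have hs0 : (0 : ℚ) < s := by exact_mod_cast (le_max_left _ _).trans hs
    have := Int.ceil_le.1 hK
    push_cast at this
    exact_mod_cast (div_le_iff₀ hs0).1 this
  have hcols : span ℝ (Set.range B.col) = ⊤ := by
    refine eq_top_of_finrank_eq ?_
    rw [← rank_eq_finrank_span_cols, hB, finrank_fin_fun]
  have hker : finrank ℝ (LinearMap.ker A.toLin') ≤ s := by
    have h := A.rank_add_finrank_ker_toLin'
    rw [Fintype.card_fin] at h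
    exact (Nat.le_sub_of_add_le' h.le).trans ((le_max_right _ _).trans hs)
  obtain ⟨T, hcard, hT⟩ := exists_pow_schedule_min_le_finrank_span A.toLin' hcols hker K 0
  rw [pow_zero, Module.End.one_eq_id, LinearMap.range_id, finrank_top, finrank_fin_fun,
    min_eq_left hKs, zero_add, ← Finset.range_eq_Ico] at hT
  refine ⟨fun k => T (K - 1 - k), fun k => hcard _,
    le_antisymm ((rank_le_card_height _).trans_eq (Fintype.card_fin n)) ?_⟩
  rw [rank_eq_finrank_span_cols]
  exact hT.trans (finrank_mono (span_pow_image_col_le_span_col_controllabilityMatrix A B T K))
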